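/- For every complex number x and natural number n, the sum over k from 0 to n of x^k * (L_{3k} + (2*x - 1) * F_{3k+3}) equals 2 * x^(n+1) * F_{3n+3}, where F and L are the Fibonacci and Lucas numbers. -/
import Mathlib


open Finset

noncomputable def fibC : ℕ → ℂ
  | 0 => 0
  | 1 => 1
  | n + 2 => fibC (n + 1) + fibC n

noncomputable def lucasC : ℕ → ℂ
  | 0 => 2
  | 1 => 1
  | n + 2 => lucasC (n + 1) + lucasC n

lemma lucas_eq (m : ℕ) : lucasC m = fibC (m + 3) - 2 * fibC m := by
  induction m using Nat.twoStepInduction with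
  | zero => simp [lucasC, fibC]; ring
  | one => simp [lucasC, fibC]; ring
  | more n ih1 ih2 =>
    have h3 : fibC (n + 2 + 3) = fibC (n + 1 + 3) + fibC (n + 3) := by
      show fibC (n + 3 + 2) = _
      rw [fibC]
    have h4 : fibC (n + 2) = fibC (n + 1) + fibC n := by rw [fibC]
    rw [lucasC, ih1, ih2, h3, h4]
    ring

theorem stmt11 (x : ℂ) (n : ℕ) :
    ∑ k ∈ Finset.range (n + 1), x ^ k * (lucasC (3 * k) + (2 * x - 1) * fibC (3 * k + 3)) =
      2 * x ^ (n + 1) * fibC (3 * n + 3) := by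
  induction n with
  | zero => simp [lucasC, fibC]; ring
  | succ n ih =>
    rw [Finset.sum_range_succ, ih, lucas_eq]
    have h1 : 3 * (n + 1) + 3 = 3 * n + 3 + 3 := by ring
    have h2 : fibC (3 * n + 3 + 3) = fibC (3 * n + 3 + 2) + fibC (3 * n + 3 + 1) := by
      show fibC (3 * n + 4 + 2) = _
      rw [fibC]
    have h3 : fibC (3 * n + 3 + 2) = fibC (3 * n + 3 + 1) + fibC (3 * n + 3) := by
      show fibC (3 * n + 3 + 2) = _
      rw [fibC]
    rw [h1, h2, h3]
    ring
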